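/- Let G be a connected bipartite graph with bipartition V1 ∪ V2 and let x1 ∈ V1 be a vertex of degree 1 with N_G(x1) ≠ V2 and |V1| ≥ 2, |V2| ≥ 2. Then x1 is a shedding vertex of the complement graph Ḡ: for every independent set S of Ḡ \ N_Ḡ[x1], there exists v ∈ N_Ḡ(x1) such that S ∪ {v} is independent in Ḡ \ {x1}. -/

import Mathlib

open SimpleGraph

variable {V : Type*}

/-- `S` is an independent set of `G`: no two (distinct) members are adjacent. -/
def IsIndepOn (G : SimpleGraph V) (S : Set V) : Prop :=
  S.Pairwise fun u w => ¬ G.Adj u w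

/-- The closed neighborhood `N_G[v]` of `v` in `G`. -/
def closedNbhd (G : SimpleGraph V) (v : V) : Set V :=
  {u | G.Adj v u} ∪ {v}

/-- Vertex decomposability of the independence complex of the induced subgraph of `G`
on the vertex set `A`. -/
inductive VertexDecomp (G : SimpleGraph V) : Set V → Prop
  | discrete (A : Set V) (h : ∀ u ∈ A, ∀ w ∈ A, ¬ G.Adj u w) : VertexDecomp G A
  | shed (A : Set V) (v : V) (hv : v ∈ A)
      (hshed : ∀ S : Set V, S ⊆ A \ closedNbhd G v → IsIndepOn G S →
        ∃ x ∈ A, G.Adj v x ∧ IsIndepOn G (insert x S))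
      (hdel : VertexDecomp G (A \ {v}))
      (hlink : VertexDecomp G (A \ closedNbhd G v)) : VertexDecomp G A

/-- `v` is a shedding vertex of `H`: every independent set avoiding `N_H[v]` can be
extended by a neighbor of `v` to an independent set of `H \ {v}`. -/
def IsSheddingVertex (H : SimpleGraph V) (v : V) : Prop :=
  ∀ S : Set V, S ∩ closedNbhd H v = ∅ → IsIndepOn H S →
    ∃ x, H.Adj v x ∧ IsIndepOn H (insert x S)

/-! In `Gᶜ` the closed neighbourhood of `x1` is everything except its unique `G`-neighbour `y`,
so an independent set of `Gᶜ` avoiding it is `∅` or `{y}`, and any `G`-neighbour `w ≠ x1` of `y`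
extends it. Such a `w` exists: otherwise `{x1, y}` would be closed under adjacency, hence all of
the connected graph `G`, while `V2` supplies a third vertex. -/

namespace SimpleGraph

variable {G : SimpleGraph V}

theorem closedNbhd_compl (v : V) : closedNbhd Gᶜ v = (G.neighborSet v)ᶜ := by
  ext u
  by_cases h : u = v
  · subst h; simp [closedNbhd]
  · simp [closedNbhd, h, Ne.symm h]

theorem isIndepOn_compl_iff {S : Set V} : IsIndepOn Gᶜ S ↔ G.IsClique S := by
  refine forall₂_congr fun u _ => forall₃_congr fun w _ huw => ?_
  simp [huw]

theorem Preconnected.exists_adj_ne_of_neighborSet_eq_singleton (hG : G.Preconnected)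
    {x y z : V} (hx : G.neighborSet x = {y}) (hzx : z ≠ x) (hzy : z ≠ y) :
    ∃ w, w ≠ x ∧ G.Adj y w := by
  obtain ⟨p⟩ := hG x z
  obtain ⟨d, -, hfst, hsnd⟩ :=
    p.exists_boundary_dart {x, y} (Set.mem_insert x _) (by simp [hzx, hzy])
  simp only [Set.mem_insert_iff, Set.mem_singleton_iff, not_or] at hfst hsnd
  rcases hfst with hfst | hfst
  · have : d.snd ∈ G.neighborSet x := hfst ▸ d.adj
    rw [hx] at this
    exact (hsnd.2 this).elim
  · exact ⟨d.snd, hsnd.1, hfst ▸ d.adj⟩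

theorem isSheddingVertex_compl_of_neighborSet_eq_singleton {x y w : V}
    (hx : G.neighborSet x = {y}) (hwx : w ≠ x) (hyw : G.Adj y w) :
    IsSheddingVertex Gᶜ x := by
  intro S hS hSind
  have hSy : S ⊆ {y} := by
    rw [closedNbhd_compl, hx] at hS
    exact Set.sdiff_eq_empty.mp hS
  have hwy : w ≠ y := hyw.ne.symm
  refine ⟨w, (compl_adj G x w).mpr ⟨hwx.symm, fun h => hwy ?_⟩, ?_⟩
  · simpa [hx] using show w ∈ G.neighborSet x from h
  · rw [isIndepOn_compl_iff]
    exact (isClique_pair.mpr fun _ => hyw.symm).subset (Set.insert_subset_insert hSy)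

end SimpleGraph

theorem degree_one_vertex_is_shedding_of_complement {V : Type*} [Fintype V]
    (G : SimpleGraph V) [DecidableRel G.Adj] (V1 V2 : Set V)
    (hdisj : Disjoint V1 V2)
    (hconn : G.Connected)
    (x1 : V) (hx1 : x1 ∈ V1) (hdeg : G.degree x1 = 1)
    (hV2 : 2 ≤ V2.ncard) :
    IsSheddingVertex Gᶜ x1 := by
  obtain ⟨y, hy⟩ : ∃ y, G.neighborSet x1 = {y} := by
    obtain ⟨y, hy, huniq⟩ := degree_eq_one_iff_existsUnique_adj.mp hdeg
    exact ⟨y, Set.eq_singleton_iff_unique_mem.mpr ⟨hy, huniq⟩⟩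
  obtain ⟨z, hzV2, hzy⟩ := Set.exists_ne_of_one_lt_ncard hV2 y
  have hzx : z ≠ x1 := (hdisj.ne_of_mem hx1 hzV2).symm
  obtain ⟨w, hwx, hyw⟩ := hconn.preconnected.exists_adj_ne_of_neighborSet_eq_singleton hy hzx hzy
  exact isSheddingVertex_compl_of_neighborSet_eq_singleton hy hwx hyw
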